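/- Let m ≥ 3 be odd with s = max{v₂(m+1), v₂(m−1)}. Then for every n ≥ 2 and every odd t ∈ ℤ₂, the 2-adic valuation of T_m(1 + 2^n t) − (1 + 2^n t) equals s + n + 1. -/

import Mathlib

/-!
Write `m = 2b + 1` and `x = 1 + 2ⁿt`. The identity `T_{a+k} - T_{a-k} = 2 (X² - 1) U_{a-1} U_{k-1}`
with `a = b + 1`, `k = b` gives `T_m(x) - x = 2 (x² - 1) U_b(x) U_{b-1}(x)`. For `x ≡ 1 mod 2`,
`T_j(x) ≡ T_j(1) = 1` is a unit, and `U_j(x)` has valuation `v₂(j + 1)`: for even `j` it is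
`≡ U_j(1) = j + 1 mod 2`, and `U_{2c+1} = 2 T_{c+1} U_c` handles odd `j`. Since `n ≥ 2`,
`v₂(x² - 1) = n + 1`, and as one of `b, b + 1` is odd, `v₂(b) + v₂(b + 1) + 1 = s`.
-/

open Polynomial Polynomial.Chebyshev

namespace Polynomial.Chebyshev

variable (R : Type*) [CommRing R]

theorem two_mul_T_mul_U (j k : ℤ) : 2 * T R k * U R j = U R (j + k) + U R (j - k) := by
  induction k using Polynomial.Chebyshev.induct with
  | zero => simp [two_mul]
  | one => rw [T_one, U_add_one, U_sub_one]; ring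
  | add_two k ih1 ih2 =>
    have h₁ := U_add_two R (j + k)
    have h₂ := U_sub_two R (j - k)
    have h₃ := T_add_two R k
    linear_combination (norm := ring_nf) 2 * U R j * h₃ - h₂ - h₁ - ih2 + 2 * (X : R[X]) * ih1
  | neg_add_one k ih1 ih2 =>
    have h₁ := U_add_two R (j + (-k - 1))
    have h₂ := U_sub_two R (j - (-k - 1))
    have h₃ := T_add_two R (-k - 1)
    linear_combination (norm := ring_nf) 2 * U R j * h₃ - h₂ - h₁ - ih2 + 2 * (X : R[X]) * ih1

theorem U_two_mul_add_one (c : ℤ) : U R (2 * c + 1) = 2 * T R (c + 1) * U R c := by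
  rw [two_mul_T_mul_U, show c - (c + 1) = -1 by ring, U_neg_one, add_zero]
  ring_nf

theorem T_add_sub_T_sub (a k : ℤ) :
    T R (a + k) - T R (a - k) = 2 * (X ^ 2 - 1) * U R (a - 1) * U R (k - 1) := by
  induction k using Polynomial.Chebyshev.induct with
  | zero => simp
  | one =>
    rw [sub_self, U_zero, mul_one]
    have h₁ := T_eq_X_mul_T_sub_pol_U R (a - 1)
    have h₂ := T_sub_one R a
    linear_combination (norm := ring_nf) 2 * h₁ - h₂
  | add_two k ih1 ih2 =>
    have h₁ := T_add_two R (a + k)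
    have h₂ := T_sub_two R (a - k)
    have h₃ := U_add_two R (k - 1)
    linear_combination (norm := ring_nf)
      h₁ - h₂ + 2 * X * ih1 - ih2 - 2 * (X ^ 2 - 1) * U R (a - 1) * h₃
  | neg_add_one k ih1 ih2 =>
    have h₁ := T_add_two R (a - k - 1)
    have h₂ := T_add_two R (a + k - 1)
    have h₃ := U_add_two R (-k - 2)
    linear_combination (norm := ring_nf)
      h₁ - h₂ + 2 * X * ih1 - ih2 - 2 * (X ^ 2 - 1) * U R (a - 1) * h₃

theorem T_two_mul_add_one_sub_X (k : ℤ) :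
    T R (2 * k + 1) - X = 2 * (X ^ 2 - 1) * U R k * U R (k - 1) := by
  have h := T_add_sub_T_sub R (k + 1) k
  rwa [add_sub_cancel_left, T_one, add_sub_cancel_right, add_right_comm, ← two_mul] at h

end Polynomial.Chebyshev

theorem padicValNat_self_mul {p : ℕ} [Fact p.Prime] {b : ℕ} (hb : b ≠ 0) :
    padicValNat p (p * b) = padicValNat p b + 1 := by
  rw [padicValNat.mul (Fact.out : p.Prime).ne_zero hb, padicValNat_self, add_comm]

theorem padicValNat_two_eq_zero_or_succ_eq_zero (b : ℕ) :
    padicValNat 2 b = 0 ∨ padicValNat 2 (b + 1) = 0 := by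
  rcases Nat.even_or_odd' b with ⟨c, rfl | rfl⟩
  · exact Or.inr (padicValNat.eq_zero_of_not_dvd (by omega))
  · exact Or.inl (padicValNat.eq_zero_of_not_dvd (by omega))

namespace PadicInt

section

variable {p : ℕ} [Fact p.Prime]

theorem isUnit_iff_not_dvd {z : ℤ_[p]} : IsUnit z ↔ ¬ (p : ℤ_[p]) ∣ z := by
  rw [← norm_lt_one_iff_dvd, ← not_isUnit_iff, not_not]

theorem isUnit_of_dvd_sub_one {z : ℤ_[p]} (h : (p : ℤ_[p]) ∣ z - 1) : IsUnit z := by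
  refine isUnit_iff_not_dvd.mpr fun hz => p_nonunit (p := p) (isUnit_of_dvd_one ?_)
  simpa using dvd_sub hz h

theorem valuation_units (u : ℤ_[p]ˣ) : (u : ℤ_[p]).valuation = 0 := by
  have h := valuation_mul u.ne_zero u⁻¹.ne_zero
  rw [Units.mul_inv, valuation_one] at h
  omega

theorem valuation_eq_of_associated {x y : ℤ_[p]} (h : Associated x y) :
    x.valuation = y.valuation := by
  obtain ⟨u, rfl⟩ := h
  rcases eq_or_ne x 0 with rfl | hx
  · simp
  · rw [valuation_mul hx u.ne_zero, valuation_units, add_zero]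

end

theorem valuation_two_pow (k : ℕ) : ((2 : ℤ_[2]) ^ k).valuation = k := by
  simpa using valuation_p_pow_mul (p := 2) k 1 one_ne_zero

theorem associated_one_add_two_pow_mul_sq_sub_one {n : ℕ} (hn : 2 ≤ n) {t : ℤ_[2]}
    (ht : IsUnit t) : Associated ((1 + 2 ^ n * t) ^ 2 - 1) (2 ^ (n + 1)) := by
  obtain ⟨k, rfl⟩ : ∃ k, n = k + 2 := ⟨n - 2, by omega⟩
  have hunit : IsUnit (1 + 2 ^ (k + 1) * t) :=
    isUnit_of_dvd_sub_one ⟨2 ^ k * t, by push_cast; ring⟩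
  rw [show (1 + 2 ^ (k + 2) * t) ^ 2 - 1 = 2 ^ (k + 2 + 1) * (t * (1 + 2 ^ (k + 1) * t)) by ring]
  exact associated_mul_unit_left _ _ (ht.mul hunit)

theorem isUnit_eval_T_of_two_dvd_sub_one {x : ℤ_[2]} (hx : 2 ∣ x - 1) (k : ℤ) :
    IsUnit ((T ℤ_[2] k).eval x) := by
  apply isUnit_of_dvd_sub_one
  have h := sub_dvd_eval_sub x 1 (T ℤ_[2] k)
  rw [T_eval_one] at h
  exact_mod_cast hx.trans h

theorem associated_eval_U_of_two_dvd_sub_one {x : ℤ_[2]} (hx : 2 ∣ x - 1) (b : ℕ) :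
    Associated ((U ℤ_[2] b).eval x) (2 ^ padicValNat 2 (b + 1)) := by
  induction b using Nat.strong_induction_on with
  | _ b ih =>
  obtain ⟨c, rfl | rfl⟩ := Nat.even_or_odd' b
  · rw [padicValNat.eq_zero_of_not_dvd (by omega), pow_zero, associated_one_iff_isUnit]
    apply isUnit_of_dvd_sub_one
    have h := sub_dvd_eval_sub x 1 (U ℤ_[2] (2 * c : ℕ))
    rw [U_eval_one] at h
    have hsplit : (U ℤ_[2] (2 * c : ℕ)).eval x - 1
        = ((U ℤ_[2] (2 * c : ℕ)).eval x - (((2 * c : ℕ) : ℤ) + 1 : ℤ_[2])) + 2 * c := by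
      push_cast; ring
    rw [hsplit]
    exact_mod_cast dvd_add (hx.trans h) (dvd_mul_right 2 (c : ℤ_[2]))
  · have hU : (U ℤ_[2] (2 * c + 1 : ℕ)).eval x
        = 2 * (T ℤ_[2] (c + 1)).eval x * (U ℤ_[2] c).eval x := by
      push_cast
      rw [U_two_mul_add_one]
      simp
    have hv : padicValNat 2 (2 * c + 1 + 1) = padicValNat 2 (c + 1) + 1 := by
      rw [show 2 * c + 1 + 1 = 2 * (c + 1) by ring, padicValNat_self_mul (by omega)]
    have h := (Associated.refl (2 : ℤ_[2])).mul_mul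
      ((associated_one_iff_isUnit.mpr (isUnit_eval_T_of_two_dvd_sub_one hx (c + 1))).mul_mul
        (ih c (by omega)))
    rw [hU, hv, pow_succ']
    rwa [one_mul, ← mul_assoc] at h

end PadicInt

theorem chebyshev_valuation_near_one (m : ℕ) (hm : 3 ≤ m) (hodd : Odd m)
    (s : ℕ) (hs : s = max (padicValNat 2 (m + 1)) (padicValNat 2 (m - 1)))
    (n : ℕ) (hn : 2 ≤ n) (t : ℤ_[2]) (ht : ¬ (2 : ℤ_[2]) ∣ t) :
    ((Polynomial.Chebyshev.T ℤ_[2] m).eval (1 + 2 ^ n * t) - (1 + 2 ^ n * t)).valuation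
      = (s : ℤ) + (n : ℤ) + 1 := by
  obtain ⟨c, rfl⟩ : ∃ c, m = 2 * (c + 1) + 1 := by obtain ⟨b, rfl⟩ := hodd; exact ⟨b - 1, by omega⟩
  have hs' : s = padicValNat 2 (c + 2) + padicValNat 2 (c + 1) + 1 := by
    rw [hs, show 2 * (c + 1) + 1 + 1 = 2 * (c + 2) by ring, Nat.add_sub_cancel,
      padicValNat_self_mul (by omega), padicValNat_self_mul (by omega)]
    rcases padicValNat_two_eq_zero_or_succ_eq_zero (c + 1) with h | h <;> simp [h]
  set x : ℤ_[2] := 1 + 2 ^ n * t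
  have hx : 2 ∣ x - 1 := by
    rw [add_sub_cancel_left]
    exact (dvd_pow_self 2 (by omega)).mul_right t
  have hfactor : (T ℤ_[2] (2 * (c + 1) + 1 : ℕ)).eval x - x
      = 2 * (x ^ 2 - 1) * (U ℤ_[2] (c + 1 : ℕ)).eval x * (U ℤ_[2] c).eval x := by
    simpa using congrArg (eval x) (T_two_mul_add_one_sub_X ℤ_[2] (c + 1))
  have hassoc : Associated ((T ℤ_[2] (2 * (c + 1) + 1 : ℕ)).eval x - x)
      (2 ^ (n + 2 + padicValNat 2 (c + 2) + padicValNat 2 (c + 1))) := by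
    have htu : IsUnit t := PadicInt.isUnit_iff_not_dvd.mpr (by exact_mod_cast ht)
    rw [hfactor]
    refine ((((Associated.refl 2).mul_mul
      (PadicInt.associated_one_add_two_pow_mul_sq_sub_one hn htu)).mul_mul
      (PadicInt.associated_eval_U_of_two_dvd_sub_one hx (c + 1))).mul_mul
      (PadicInt.associated_eval_U_of_two_dvd_sub_one hx c)).trans (.of_eq ?_)
    ring
  rw [PadicInt.valuation_eq_of_associated hassoc, PadicInt.valuation_two_pow, hs']
  push_cast
  ring
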